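/- arXiv:1807.05167 — 2 statements merged into one kernel-verified Lean document; each statement's English description precedes it below -/
import Mathlib

section
/- Let Λ = [0,1]^d be the d-dimensional torus, λ:Λ→(0,∞) continuous, and let ρ:Λ→[0,∞) be integrable. Then the Legendre transform of f↦∫_Λ λ(e^f − 1) dx evaluated at ρ, namely V(ρ) = sup over continuous f:Λ→ℝ of [ ∫_Λ f ρ dx − ∫_Λ λ(e^f − 1) dx ], equals ∫_Λ [ ρ(x) log ρ(x) − λ(x) log λ(x) − (log λ(x) + 1)(ρ(x) − λ(x)) ] dx = ∫_Λ [ ρ(x) log(ρ(x)/λ(x)) − ρ(x) + λ(x) ] dx, as an equality in [0,+∞] (with the convention 0·log 0 = 0). Moreover V(ρ)=0 if and only if ρ(x)=λ(x) for almost every x. -/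
/-! For fixed `r ≥ 0` and `l > 0` the concave function `t ↦ t r - l (eᵗ - 1)` has supremum
`r log (r / l) - r + l = l · klFun (r / l)`, attained at `t = log (r / l)` when `r > 0` and
approached as `t → -∞` when `r = 0`; integrating this pointwise bound gives `≤`.
Conversely, truncating the pointwise maximiser at levels `±n` makes the integrand increase to
the rate density, so by monotone convergence it suffices to reach bounded measurable `f`.
Such an `f` is an a.e. limit of continuous functions with the same bound (density of continuous
functions in `L¹` on a compact metric space, a subsequence, and clamping), and dominated
convergence passes the value of the functional to the limit. The rate vanishes exactly when
`klFun (ρ / λ) = 0` a.e., i.e. `ρ = λ` a.e. -/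

open MeasureTheory Filter Topology Real InformationTheory

noncomputable def legendrePairing (l r t : ℝ) : ℝ := t * r - l * (exp t - 1)

-- `Real.log 0 = 0` makes this the density with the convention `0 * log 0 = 0`.
noncomputable def poissonRate (l r : ℝ) : ℝ := r * log (r / l) - r + l

noncomputable def truncatedMaximizer (l r : ℝ) (n : ℕ) : ℝ :=
  if r = 0 then -n else max (-n) (min n (log (r / l)))

lemma continuous_legendrePairing (l r : ℝ) : Continuous (legendrePairing l r) := by
  unfold legendrePairing
  fun_prop

section

variable {l r : ℝ}

lemma poissonRate_eq_mul_klFun (hl : l ≠ 0) : poissonRate l r = l * klFun (r / l) := by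
  rw [poissonRate, klFun]
  field_simp
  ring

lemma poissonRate_nonneg (hl : 0 < l) (hr : 0 ≤ r) : 0 ≤ poissonRate l r := by
  rw [poissonRate_eq_mul_klFun hl.ne']
  exact mul_nonneg hl.le (klFun_nonneg (div_nonneg hr hl.le))

lemma poissonRate_eq_zero_iff (hl : 0 < l) (hr : 0 ≤ r) : poissonRate l r = 0 ↔ r = l := by
  rw [poissonRate_eq_mul_klFun hl.ne', mul_eq_zero, klFun_eq_zero_iff (div_nonneg hr hl.le),
    div_eq_one_iff_eq hl.ne', or_iff_right hl.ne']

lemma mul_log_sub_mul_log_sub_eq_poissonRate (hl : l ≠ 0) :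
    r * log r - l * log l - (log l + 1) * (r - l) = poissonRate l r := by
  rcases eq_or_ne r 0 with rfl | hr
  · simp only [poissonRate, zero_div, log_zero, mul_zero]
    ring
  · rw [poissonRate, log_div hr hl]
    ring

lemma legendrePairing_log_div (hl : 0 < l) (hr : 0 < r) :
    legendrePairing l r (log (r / l)) = poissonRate l r := by
  rw [legendrePairing, poissonRate, exp_log (div_pos hr hl)]
  field_simp
  ring

lemma legendrePairing_le_add_mul_sub (hl : 0 ≤ l) (s t : ℝ) :
    legendrePairing l r t ≤ legendrePairing l r s + (r - l * exp s) * (t - s) := by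
  have tangent : exp s * (t - s + 1) ≤ exp t := by
    simpa [← exp_add] using mul_le_mul_of_nonneg_left (add_one_le_exp (t - s)) (exp_pos s).le
  unfold legendrePairing
  nlinarith [mul_le_mul_of_nonneg_left tangent hl]

lemma legendrePairing_le_poissonRate (hl : 0 < l) (hr : 0 ≤ r) (t : ℝ) :
    legendrePairing l r t ≤ poissonRate l r := by
  rcases hr.eq_or_lt with rfl | hr
  · simp only [legendrePairing, poissonRate, mul_zero, zero_div, log_zero, zero_sub, sub_zero,
      zero_add]
    nlinarith [exp_pos t]
  · have := legendrePairing_le_add_mul_sub (r := r) hl.le (log (r / l)) t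
    rwa [legendrePairing_log_div hl hr, exp_log (div_pos hr hl), mul_div_cancel₀ _ hl.ne',
      sub_self, zero_mul, add_zero] at this

lemma abs_mul_exp_sub_one_le {M C t : ℝ} (hl : |l| ≤ M) (ht : |t| ≤ C) :
    |l * (exp t - 1)| ≤ M * (exp C + 1) := by
  have hexp : |exp t - 1| ≤ exp C + 1 := by
    have := exp_le_exp.mpr ((le_abs_self t).trans ht)
    rw [abs_le]
    constructor <;> linarith [exp_pos t]
  rw [abs_mul]
  exact mul_le_mul hl hexp (abs_nonneg _) ((abs_nonneg _).trans hl)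

lemma abs_legendrePairing_le {M C t : ℝ} (hr : 0 ≤ r) (hl : |l| ≤ M) (ht : |t| ≤ C) :
    |legendrePairing l r t| ≤ C * r + M * (exp C + 1) :=
  calc |legendrePairing l r t| ≤ |t * r| + |l * (exp t - 1)| := abs_sub _ _
    _ ≤ C * r + M * (exp C + 1) := by
      rw [abs_mul, abs_of_nonneg hr]
      exact add_le_add (mul_le_mul_of_nonneg_right ht hr) (abs_mul_exp_sub_one_le hl ht)

lemma abs_truncatedMaximizer_le (n : ℕ) : |truncatedMaximizer l r n| ≤ n := by
  unfold truncatedMaximizer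
  split_ifs
  · simp
  · exact abs_le.mpr ⟨le_max_left _ _, max_le (neg_le_self n.cast_nonneg) (min_le_left _ _)⟩

lemma legendrePairing_truncatedMaximizer_zero :
    legendrePairing l r (truncatedMaximizer l r 0) = 0 := by
  simp [truncatedMaximizer, legendrePairing]

lemma monotone_legendrePairing_truncatedMaximizer (hl : 0 < l) (hr : 0 ≤ r) :
    Monotone fun n => legendrePairing l r (truncatedMaximizer l r n) := by
  intro a b hab
  have hab : (a : ℝ) ≤ b := Nat.cast_le.mpr hab
  have tangent := legendrePairing_le_add_mul_sub (r := r) hl.le (truncatedMaximizer l r b)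
    (truncatedMaximizer l r a)
  suffices (r - l * exp (truncatedMaximizer l r b)) *
      (truncatedMaximizer l r a - truncatedMaximizer l r b) ≤ 0 by linarith
  rcases hr.eq_or_lt with rfl | hr
  · simp only [truncatedMaximizer, if_pos]
    exact mul_nonpos_of_nonpos_of_nonneg (by nlinarith [exp_pos (-b : ℝ)]) (by linarith)
  · set T := log (r / l)
    have hT : l * exp T = r := by rw [exp_log (div_pos hr hl), mul_div_cancel₀ _ hl.ne']
    simp only [truncatedMaximizer, if_neg hr.ne']
    rcases le_total 0 T with hT0 | hT0
    · have hmax (k : ℕ) : max (-k : ℝ) (min (k : ℝ) T) = min (k : ℝ) T :=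
        max_eq_right ((neg_nonpos.mpr k.cast_nonneg).trans (le_min k.cast_nonneg hT0))
      rw [hmax, hmax]
      have := mul_le_mul_of_nonneg_left (exp_le_exp.mpr (min_le_right (b : ℝ) T)) hl.le
      exact mul_nonpos_of_nonneg_of_nonpos (by linarith) (sub_nonpos.mpr (min_le_min_right _ hab))
    · have hmin (k : ℕ) : min (k : ℝ) T = T := min_eq_right (hT0.trans k.cast_nonneg)
      rw [hmin, hmin]
      have := mul_le_mul_of_nonneg_left (exp_le_exp.mpr (le_max_right (-b : ℝ) T)) hl.le
      exact mul_nonpos_of_nonpos_of_nonneg (by linarith)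
        (sub_nonneg.mpr (max_le_max_right _ (neg_le_neg hab)))

lemma tendsto_legendrePairing_truncatedMaximizer (hl : 0 < l) (hr : 0 ≤ r) :
    Tendsto (fun n => legendrePairing l r (truncatedMaximizer l r n)) atTop
      (𝓝 (poissonRate l r)) := by
  rcases hr.eq_or_lt with rfl | hr
  · have hexp : Tendsto (fun n : ℕ => exp (-n)) atTop (𝓝 0) :=
      tendsto_exp_atBot.comp (tendsto_neg_atTop_atBot.comp tendsto_natCast_atTop_atTop)
    simpa [truncatedMaximizer, legendrePairing, poissonRate] using
      ((hexp.sub_const 1).const_mul l).neg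
  · obtain ⟨N, hN⟩ := exists_nat_ge |log (r / l)|
    refine tendsto_const_nhds.congr' (eventually_atTop.mpr ⟨N, fun n hn => ?_⟩)
    have hn : |log (r / l)| ≤ n := hN.trans (Nat.cast_le.mpr hn)
    simp only [truncatedMaximizer, if_neg hr.ne']
    rw [min_eq_right (abs_le.mp hn).2, max_eq_right (abs_le.mp hn).1, legendrePairing_log_div hl hr]

end

theorem exists_seq_continuousMap_tendsto_ae_of_abs_le {X : Type*} [TopologicalSpace X]
    [NormalSpace X] [MeasurableSpace X] [BorelSpace X] (μ : Measure X) [IsFiniteMeasure μ]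
    [μ.WeaklyRegular] {φ : X → ℝ} (hφ : AEStronglyMeasurable φ μ) {C : ℝ}
    (hφC : ∀ x, |φ x| ≤ C) :
    ∃ g : ℕ → C(X, ℝ), (∀ n x, |g n x| ≤ C) ∧
      ∀ᵐ x ∂μ, Tendsto (fun n => g n x) atTop (𝓝 (φ x)) := by
  have hφ1 : MemLp φ 1 μ :=
    memLp_one_iff_integrable.2 (Integrable.of_bound hφ C (ae_of_all _ hφC))
  choose h hh using fun n : ℕ => hφ1.exists_boundedContinuous_eLpNorm_sub_le ENNReal.one_ne_top
    (ENNReal.inv_ne_zero.2 (ENNReal.natCast_ne_top n))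
  have hL1 : Tendsto (fun n => eLpNorm (⇑(h n) - φ) 1 μ) atTop (𝓝 0) :=
    tendsto_of_tendsto_of_tendsto_of_le_of_le tendsto_const_nhds
      ENNReal.tendsto_inv_nat_nhds_zero (fun _ => zero_le)
      (fun n => (eLpNorm_sub_comm _ _ _ _).trans_le (hh n).1)
  obtain ⟨ns, -, hns⟩ := (tendstoInMeasure_of_tendsto_eLpNorm one_ne_zero
    (fun n => (h n).continuous.aestronglyMeasurable) hφ hL1).exists_seq_tendsto_ae
  let clamp : C(ℝ, ℝ) := ⟨fun t => max (-C) (min C t), by fun_prop⟩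
  have clamp_eq {t : ℝ} (ht : |t| ≤ C) : clamp t = t :=
    (congrArg _ (min_eq_right (abs_le.mp ht).2)).trans (max_eq_right (abs_le.mp ht).1)
  refine ⟨fun n => clamp.comp (h (ns n)).toContinuousMap, fun n x => ?_, ?_⟩
  · have hC : 0 ≤ C := (abs_nonneg _).trans (hφC x)
    exact abs_le.mpr ⟨le_max_left _ _, max_le (by linarith) (min_le_left _ _)⟩
  · filter_upwards [hns] with x hx
    have := (clamp.continuous.tendsto (φ x)).comp hx
    rwa [clamp_eq (hφC x)] at this

lemma ofReal_integral_le_lintegral_ofReal {X : Type*} [MeasurableSpace X] {μ : Measure X}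
    {h : X → ℝ} (hh : Integrable h μ) :
    ENNReal.ofReal (∫ x, h x ∂μ) ≤ ∫⁻ x, ENNReal.ofReal (h x) ∂μ := by
  refine ENNReal.ofReal_le_of_le_toReal ?_
  rw [integral_eq_lintegral_pos_part_sub_lintegral_neg_part hh]
  exact sub_le_self _ ENNReal.toReal_nonneg

theorem lintegral_poissonRate_eq_zero_iff {X : Type*} [MeasurableSpace X] {μ : Measure X}
    {lam ρ : X → ℝ} (hlam_meas : Measurable lam) (hlam_pos : ∀ x, 0 < lam x)
    (hρ_meas : Measurable ρ) (hρ_nonneg : ∀ x, 0 ≤ ρ x) :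
    ∫⁻ x, ENNReal.ofReal (poissonRate (lam x) (ρ x)) ∂μ = 0 ↔ ρ =ᵐ[μ] lam := by
  rw [lintegral_eq_zero_iff' (by unfold poissonRate; fun_prop)]
  refine eventually_congr (ae_of_all _ fun x => ?_)
  rw [Pi.zero_apply, ENNReal.ofReal_eq_zero,
    ← poissonRate_eq_zero_iff (hlam_pos x) (hρ_nonneg x)]
  exact ⟨fun h => h.antisymm (poissonRate_nonneg (hlam_pos x) (hρ_nonneg x)), le_of_eq⟩

section LegendreTransform

variable {X : Type*} [TopologicalSpace X] [CompactSpace X] [MeasurableSpace X]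
  [OpensMeasurableSpace X] {μ : Measure X} [IsFiniteMeasure μ] {lam : C(X, ℝ)} {ρ : X → ℝ}

lemma integrable_mul_exp_sub_one {f : X → ℝ} (hf : AEStronglyMeasurable f μ) {C : ℝ}
    (hfC : ∀ x, |f x| ≤ C) : Integrable (fun x => lam x * (exp (f x) - 1)) μ :=
  Integrable.of_bound (by fun_prop) _
    (ae_of_all _ fun x => abs_mul_exp_sub_one_le (lam.norm_coe_le_norm x) (hfC x))

lemma integrable_legendrePairing (hρ_int : Integrable ρ μ) {f : X → ℝ}
    (hf : AEStronglyMeasurable f μ) {C : ℝ} (hfC : ∀ x, |f x| ≤ C) :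
    Integrable (fun x => legendrePairing (lam x) (ρ x) (f x)) μ :=
  (hρ_int.bdd_mul hf (ae_of_all _ hfC)).sub (integrable_mul_exp_sub_one hf hfC)

lemma integral_legendrePairing (hρ_int : Integrable ρ μ) {f : X → ℝ}
    (hf : AEStronglyMeasurable f μ) {C : ℝ} (hfC : ∀ x, |f x| ≤ C) :
    ∫ x, legendrePairing (lam x) (ρ x) (f x) ∂μ
      = (∫ x, f x * ρ x ∂μ) - ∫ x, lam x * (exp (f x) - 1) ∂μ :=
  integral_sub (hρ_int.bdd_mul hf (ae_of_all _ hfC)) (integrable_mul_exp_sub_one hf hfC)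

lemma ofReal_integral_legendrePairing_le_lintegral_poissonRate (hlam_pos : ∀ x, 0 < lam x)
    (hρ_nonneg : ∀ x, 0 ≤ ρ x) (hρ_int : Integrable ρ μ) {f : X → ℝ}
    (hf : AEStronglyMeasurable f μ) {C : ℝ} (hfC : ∀ x, |f x| ≤ C) :
    ENNReal.ofReal (∫ x, legendrePairing (lam x) (ρ x) (f x) ∂μ)
      ≤ ∫⁻ x, ENNReal.ofReal (poissonRate (lam x) (ρ x)) ∂μ :=
  (ofReal_integral_le_lintegral_ofReal (integrable_legendrePairing hρ_int hf hfC)).trans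
    (lintegral_mono fun x => ENNReal.ofReal_le_ofReal
      (legendrePairing_le_poissonRate (hlam_pos x) (hρ_nonneg x) _))

lemma ofReal_integral_legendrePairing_le_iSup [NormalSpace X] [BorelSpace X] [μ.WeaklyRegular]
    (hρ_nonneg : ∀ x, 0 ≤ ρ x) (hρ_int : Integrable ρ μ) {φ : X → ℝ}
    (hφ : AEStronglyMeasurable φ μ) {C : ℝ} (hφC : ∀ x, |φ x| ≤ C) :
    ENNReal.ofReal (∫ x, legendrePairing (lam x) (ρ x) (φ x) ∂μ)
      ≤ ⨆ f : C(X, ℝ),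
          ENNReal.ofReal (∫ x, legendrePairing (lam x) (ρ x) (f x) ∂μ) := by
  obtain ⟨g, hgC, hg⟩ := exists_seq_continuousMap_tendsto_ae_of_abs_le μ hφ hφC
  have hlim : Tendsto (fun n => ∫ x, legendrePairing (lam x) (ρ x) (g n x) ∂μ) atTop
      (𝓝 (∫ x, legendrePairing (lam x) (ρ x) (φ x) ∂μ)) :=
    tendsto_integral_of_dominated_convergence (fun x => C * ρ x + ‖lam‖ * (exp C + 1))
      (fun n => (integrable_legendrePairing hρ_int (g n).continuous.aestronglyMeasurable
        (hgC n)).aestronglyMeasurable)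
      ((hρ_int.const_mul C).add (integrable_const _))
      (fun n => ae_of_all _ fun x =>
        abs_legendrePairing_le (hρ_nonneg x) (lam.norm_coe_le_norm x) (hgC n x))
      (hg.mono fun x hx => ((continuous_legendrePairing _ _).tendsto _).comp hx)
  exact le_of_tendsto' ((ENNReal.continuous_ofReal.tendsto _).comp hlim) fun n =>
    le_iSup_of_le (g n) le_rfl

lemma lintegral_poissonRate_le_iSup [NormalSpace X] [BorelSpace X] [μ.WeaklyRegular]
    (hlam_pos : ∀ x, 0 < lam x) (hρ_meas : Measurable ρ) (hρ_nonneg : ∀ x, 0 ≤ ρ x)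
    (hρ_int : Integrable ρ μ) :
    ∫⁻ x, ENNReal.ofReal (poissonRate (lam x) (ρ x)) ∂μ
      ≤ ⨆ f : C(X, ℝ),
          ENNReal.ofReal (∫ x, legendrePairing (lam x) (ρ x) (f x) ∂μ) := by
  set F : ℕ → X → ℝ := fun n x =>
    legendrePairing (lam x) (ρ x) (truncatedMaximizer (lam x) (ρ x) n)
  have hmeas (n : ℕ) : Measurable fun x => truncatedMaximizer (lam x) (ρ x) n := by
    unfold truncatedMaximizer
    exact Measurable.ite (hρ_meas (measurableSet_singleton 0)) measurable_const (by fun_prop)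
  have hint (n : ℕ) : Integrable (F n) μ :=
    integrable_legendrePairing hρ_int (hmeas n).aestronglyMeasurable
      fun x => abs_truncatedMaximizer_le n
  have hmono (x : X) : Monotone fun n => F n x :=
    monotone_legendrePairing_truncatedMaximizer (hlam_pos x) (hρ_nonneg x)
  have hnonneg (n : ℕ) (x : X) : 0 ≤ F n x :=
    legendrePairing_truncatedMaximizer_zero.symm.trans_le (hmono x n.zero_le)
  have hlim : Tendsto (fun n => ∫⁻ x, ENNReal.ofReal (F n x) ∂μ) atTop
      (𝓝 (∫⁻ x, ENNReal.ofReal (poissonRate (lam x) (ρ x)) ∂μ)) :=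
    lintegral_tendsto_of_tendsto_of_monotone
      (fun n => (hint n).aestronglyMeasurable.aemeasurable.ennreal_ofReal)
      (ae_of_all _ fun x => ENNReal.ofReal_mono.comp (hmono x))
      (ae_of_all _ fun x => (ENNReal.continuous_ofReal.tendsto _).comp
        (tendsto_legendrePairing_truncatedMaximizer (hlam_pos x) (hρ_nonneg x)))
  refine le_of_tendsto' hlim fun n => ?_
  rw [← ofReal_integral_eq_lintegral_ofReal (hint n) (ae_of_all _ (hnonneg n))]
  exact ofReal_integral_legendrePairing_le_iSup hρ_nonneg hρ_int (hmeas n).aestronglyMeasurable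
    fun x => abs_truncatedMaximizer_le n

theorem iSup_ofReal_integral_sub_eq_lintegral_poissonRate [NormalSpace X] [BorelSpace X]
    [μ.WeaklyRegular] (hlam_pos : ∀ x, 0 < lam x) (hρ_meas : Measurable ρ)
    (hρ_nonneg : ∀ x, 0 ≤ ρ x) (hρ_int : Integrable ρ μ) :
    ⨆ f : C(X, ℝ),
        ENNReal.ofReal ((∫ x, f x * ρ x ∂μ) - ∫ x, lam x * (exp (f x) - 1) ∂μ)
      = ∫⁻ x, ENNReal.ofReal (poissonRate (lam x) (ρ x)) ∂μ := by
  have hbdd (f : C(X, ℝ)) (x : X) : |f x| ≤ ‖f‖ := f.norm_coe_le_norm x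
  simp_rw [← integral_legendrePairing hρ_int (ContinuousMap.continuous _).aestronglyMeasurable
    (hbdd _)]
  exact le_antisymm
    (iSup_le fun f => ofReal_integral_legendrePairing_le_lintegral_poissonRate hlam_pos hρ_nonneg
      hρ_int f.continuous.aestronglyMeasurable (hbdd f))
    (lintegral_poissonRate_le_iSup hlam_pos hρ_meas hρ_nonneg hρ_int)

end LegendreTransform

theorem stmt_8_general (d : ℕ)
    (lam : (Fin d → AddCircle (1 : ℝ)) → ℝ)
    (hlam_cont : Continuous lam) (hlam_pos : ∀ x, 0 < lam x)
    (ρ : (Fin d → AddCircle (1 : ℝ)) → ℝ)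
    (hρ_meas : Measurable ρ) (hρ_nonneg : ∀ x, 0 ≤ ρ x)
    (hρ_int : Integrable ρ) :
    (⨆ f : C(Fin d → AddCircle (1 : ℝ), ℝ),
        ENNReal.ofReal ((∫ x, f x * ρ x) - ∫ x, lam x * (Real.exp (f x) - 1)))
        = ∫⁻ x, ENNReal.ofReal
            (ρ x * Real.log (ρ x) - lam x * Real.log (lam x)
              - (Real.log (lam x) + 1) * (ρ x - lam x))
    ∧ (∫⁻ x, ENNReal.ofReal
            (ρ x * Real.log (ρ x) - lam x * Real.log (lam x)
              - (Real.log (lam x) + 1) * (ρ x - lam x)))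
        = ∫⁻ x, ENNReal.ofReal (ρ x * Real.log (ρ x / lam x) - ρ x + lam x)
    ∧ ((∫⁻ x, ENNReal.ofReal (ρ x * Real.log (ρ x / lam x) - ρ x + lam x)) = 0
        ↔ ρ =ᵐ[volume] lam) := by
  simp only [mul_log_sub_mul_log_sub_eq_poissonRate (hlam_pos _).ne']
  exact ⟨iSup_ofReal_integral_sub_eq_lintegral_poissonRate (lam := ⟨lam, hlam_cont⟩) hlam_pos
      hρ_meas hρ_nonneg hρ_int, rfl,
    lintegral_poissonRate_eq_zero_iff hlam_cont.measurable hlam_pos hρ_meas hρ_nonneg⟩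

/-- On the torus `Λ = [0,1]^d`, for continuous strictly positive `λ`
and integrable nonnegative `ρ`, the Legendre transform of
`f ↦ ∫ λ(e^f − 1)` evaluated at `ρ` (sup over continuous `f`, an equality in `[0,∞]`)
equals `∫ [ρ log ρ − λ log λ − (log λ + 1)(ρ − λ)] = ∫ [ρ log(ρ/λ) − ρ + λ]`
(with convention `0·log 0 = 0`, which holds by `Real.log 0 = 0`); moreover this
rate functional vanishes iff `ρ = λ` almost everywhere. -/
theorem stmt_8 (d : ℕ) (hd : 1 ≤ d)
    (lam : (Fin d → AddCircle (1 : ℝ)) → ℝ)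
    (hlam_cont : Continuous lam) (hlam_pos : ∀ x, 0 < lam x)
    (ρ : (Fin d → AddCircle (1 : ℝ)) → ℝ)
    (hρ_meas : Measurable ρ) (hρ_nonneg : ∀ x, 0 ≤ ρ x)
    (hρ_int : Integrable ρ) :
    (⨆ f : C(Fin d → AddCircle (1 : ℝ), ℝ),
        ENNReal.ofReal ((∫ x, f x * ρ x) - ∫ x, lam x * (Real.exp (f x) - 1)))
        = ∫⁻ x, ENNReal.ofReal
            (ρ x * Real.log (ρ x) - lam x * Real.log (lam x)
              - (Real.log (lam x) + 1) * (ρ x - lam x))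
    ∧ (∫⁻ x, ENNReal.ofReal
            (ρ x * Real.log (ρ x) - lam x * Real.log (lam x)
              - (Real.log (lam x) + 1) * (ρ x - lam x)))
        = ∫⁻ x, ENNReal.ofReal (ρ x * Real.log (ρ x / lam x) - ρ x + lam x)
    ∧ ((∫⁻ x, ENNReal.ofReal (ρ x * Real.log (ρ x / lam x) - ρ x + lam x)) = 0
        ↔ ρ =ᵐ[volume] lam) :=
  stmt_8_general d lam hlam_cont hlam_pos ρ hρ_meas hρ_nonneg hρ_int
end

section
/- Let L>0, 0<a<L, 0<b<L, K_1,K_2,D_1,D_2>0, and let (V,V',U,U') be the unique solution of the coupled Fick/Fokker–Planck stationary linear system, with Δ = D_2(K_2−K_1)b + K_1(D_2+K_2)L. Then: (1) the common boundary value satisfies v(L) = u(L) = 1 + (D_1−D_2)·((K_2−K_1)b + K_1L)/Δ > 0; (2) the derivatives V' = v_x(b−) and U' = u_x(a−) satisfy V'·U' = −K_1K_2²(D_1−D_2)²/(D_1Δ²) ≤ 0, with strict inequality (opposite signs, giving an uphill current in one of the two channels) whenever D_1 ≠ D_2; and (3) if D_1 = D_2 then V = U = 1 and V' = U' = 0,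 i.e., the solution is flat: v(x)=u(x)=1 on (0,L). -/
/-- Properties of the unique solution of the coupled
Fick/Fokker–Planck stationary linear system, with
`Δ = D₂(K₂−K₁)b + K₁(D₂+K₂)L` and
`V = 1 + K₂(D₁−D₂)b/Δ`, `V' = K₂(D₁−D₂)/Δ`,
`U = 1 + K₁K₂(D₂−D₁)a/(D₁Δ)`, `U' = K₁K₂(D₂−D₁)/(D₁Δ)`:
(1) the common boundary value `v(L) = u(L) = (K₁/K₂)V'(L−b) + V` equals
`1 + (D₁−D₂)((K₂−K₁)b + K₁L)/Δ` and is positive;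
(2) `V'·U' = −K₁K₂²(D₁−D₂)²/(D₁Δ²) ≤ 0`, with strict inequality (opposite signs,
i.e. an uphill current in one of the two channels) whenever `D₁ ≠ D₂`;
(3) if `D₁ = D₂` the solution is flat: `V = U = 1` and `V' = U' = 0`. -/
theorem stmt_19 (L a b K₁ K₂ D₁ D₂ : ℝ)
    (hL : 0 < L) (ha : 0 < a) (haL : a < L) (hb : 0 < b) (hbL : b < L)
    (hK₁ : 0 < K₁) (hK₂ : 0 < K₂) (hD₁ : 0 < D₁) (hD₂ : 0 < D₂)
    (Δ : ℝ) (hΔ : Δ = D₂ * (K₂ - K₁) * b + K₁ * (D₂ + K₂) * L)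
    (V V' U U' : ℝ)
    (hV : V = 1 + K₂ * (D₁ - D₂) * b / Δ)
    (hV' : V' = K₂ * (D₁ - D₂) / Δ)
    (hU : U = 1 + K₁ * K₂ * (D₂ - D₁) * a / (D₁ * Δ))
    (hU' : U' = K₁ * K₂ * (D₂ - D₁) / (D₁ * Δ)) :
    ((K₁ / K₂) * V' * (L - b) + V
        = 1 + (D₁ - D₂) * ((K₂ - K₁) * b + K₁ * L) / Δ
      ∧ 0 < (K₁ / K₂) * V' * (L - b) + V)
    ∧ (V' * U' = -(K₁ * K₂ ^ 2 * (D₁ - D₂) ^ 2 / (D₁ * Δ ^ 2))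
        ∧ V' * U' ≤ 0 ∧ (D₁ ≠ D₂ → V' * U' < 0))
    ∧ (D₁ = D₂ → V = 1 ∧ U = 1 ∧ V' = 0 ∧ U' = 0) := by
  have hΔpos : 0 < Δ := by
    rw [hΔ]; nlinarith [mul_pos hD₂ hK₂, mul_pos hK₁ hK₂, mul_pos hK₁ hD₂,
      mul_pos (mul_pos hK₁ hD₂) (sub_pos.mpr hbL)]
  have hΔ0 : Δ ≠ 0 := ne_of_gt hΔpos
  have heq : (K₁ / K₂) * V' * (L - b) + V
      = 1 + (D₁ - D₂) * ((K₂ - K₁) * b + K₁ * L) / Δ := by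
    rw [hV, hV']; field_simp; ring
  refine ⟨⟨heq, ?_⟩, ⟨?_, ?_, ?_⟩, ?_⟩
  · rw [heq]
    have hnum : 0 < Δ + (D₁ - D₂) * ((K₂ - K₁) * b + K₁ * L) := by
      rw [hΔ]
      nlinarith [mul_pos (mul_pos hD₁ hK₁) (sub_pos.mpr hbL),
        mul_pos (mul_pos hD₁ hK₂) hb, mul_pos (mul_pos hK₁ hK₂) hL]
    have : 0 < (Δ + (D₁ - D₂) * ((K₂ - K₁) * b + K₁ * L)) / Δ := div_pos hnum hΔpos
    calc (0:ℝ) < (Δ + (D₁ - D₂) * ((K₂ - K₁) * b + K₁ * L)) / Δ := this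
      _ = 1 + (D₁ - D₂) * ((K₂ - K₁) * b + K₁ * L) / Δ := by field_simp
  · rw [hV', hU']; field_simp; ring
  · rw [hV', hU']
    have : K₂ * (D₁ - D₂) / Δ * (K₁ * K₂ * (D₂ - D₁) / (D₁ * Δ))
        = -(K₁ * K₂ ^ 2 * (D₁ - D₂) ^ 2 / (D₁ * Δ ^ 2)) := by
      field_simp; ring
    rw [this]
    have : 0 ≤ K₁ * K₂ ^ 2 * (D₁ - D₂) ^ 2 / (D₁ * Δ ^ 2) := by positivity
    linarith
  · intro hne
    rw [hV', hU']
    have hsub : D₁ - D₂ ≠ 0 := sub_ne_zero.mpr hne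
    have : K₂ * (D₁ - D₂) / Δ * (K₁ * K₂ * (D₂ - D₁) / (D₁ * Δ))
        = -(K₁ * K₂ ^ 2 * (D₁ - D₂) ^ 2 / (D₁ * Δ ^ 2)) := by
      field_simp; ring
    rw [this]
    have : 0 < K₁ * K₂ ^ 2 * (D₁ - D₂) ^ 2 / (D₁ * Δ ^ 2) := by positivity
    linarith
  · intro h
    subst h
    simp [hV, hV', hU, hU']
end
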